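/- arXiv:0803.4386 — 2 statements merged into one kernel-verified Lean document; each statement's English description precedes it below -/
import Mathlib

section
/- Fix h ∈ Z^n and define the centroid h̄ = (h̄_0,...,h̄_n) with h̄_i = h_i + i/(n+1) (and h_0 = 0). Let G_h be the graph on {0,...,n} with edges all pairs (i,j) such that |h̄_i - h̄_j| < 1. Then for any graph G on {0,...,n}: π(h, Id) ⊆ Π_G if and only if G ⊆ G_h. -/
open scoped Classical
open MeasureTheory

noncomputable section

/-- Extension of a vector `(x_1, …, x_n)` to `(x_0, x_1, …, x_n)` with `x_0 = 0`. -/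
def extv {α : Type*} [Zero α] {n : ℕ} (x : Fin n → α) : Fin (n + 1) → α :=
  Fin.cases 0 x

/-- The polytope `Π_G = {(x_1,…,x_n) : x_0 = 0 and |x_i - x_j| ≤ 1 for all edges (i,j) of G}`
associated with a graph `G` on `{0, …, n}`. -/
def PiG (n : ℕ) (G : SimpleGraph (Fin (n + 1))) : Set (Fin n → ℝ) :=
  {x | ∀ i j : Fin (n + 1), G.Adj i j → |extv x i - extv x j| ≤ 1}

/-- The polytope `π(h, σ)`: the closure of the set of points `(x_1, …, x_n)` whose integer
parts are prescribed by `h` and whose fractional parts are positive and increase in the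
order prescribed by `σ`. -/
def piPoly (n : ℕ) (h : Fin n → ℤ) (σ : Equiv.Perm (Fin n)) : Set (Fin n → ℝ) :=
  closure {x : Fin n → ℝ | (∀ i, ⌊x i⌋ = h i) ∧ (∀ k, 0 < Int.fract (x (σ⁻¹ k))) ∧
    StrictMono fun k => Int.fract (x (σ⁻¹ k))}

/-- The centroid `h̄` of `h ∈ ℤ^n`: `h̄_i = h_i + i/(n+1)`, with the convention `h_0 = 0`. -/
def cent (n : ℕ) (h : Fin n → ℤ) : Fin (n + 1) → ℝ :=
  fun i => (extv h i : ℤ) + (i : ℝ) / (n + 1)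

/-- The graph `G_h` on `{0, …, n}` whose edges are the pairs `(i,j)` with `|h̄_i - h̄_j| < 1`. -/
def Gh (n : ℕ) (h : Fin n → ℤ) : SimpleGraph (Fin (n + 1)) where
  Adj i j := i ≠ j ∧ |cent n h i - cent n h j| < 1
  symm := ⟨fun i j hij => ⟨hij.1.symm, by rw [abs_sub_comm]; exact hij.2⟩⟩
  loopless := ⟨fun i hi => hi.1 rfl⟩

end

/-!
Write a point `x` of the open cell of `π(h, Id)`, extended by `x_0 = 0`, as `x_i = h_i + f_i` with
`0 = f_0 < f_1 < ⋯ < f_n < 1`. For `i < j` the difference `x_i - x_j` is `(h_i - h_j) + (f_i - f_j)`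
with `f_i - f_j ∈ (-1, 0)`, so `|x_i - x_j| ≤ 1` holds iff `h_j ≤ h_i ≤ h_j + 1`, independently of
`f`, and then even strictly. The centroid `h̄` is such a point (with `f_i = i/(n+1)`), so the cell
lies in `Π_G` iff every edge of `G` is an edge of `G_h`; as `Π_G` is closed, the same holds for the
closure `π(h, Id)`.
-/

section FractionalParts

variable {a b : ℤ} {s t : ℝ}

theorem abs_intCast_add_sub_le_one_iff (hs : 0 ≤ s) (hst : s < t) (ht : t < 1) :
    |(a + s) - (b + t)| ≤ 1 ↔ b ≤ a ∧ a ≤ b + 1 := by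
  rw [abs_le]
  constructor
  · rintro ⟨h₁, h₂⟩
    have hba : b < a + 1 := by exact_mod_cast (by linarith : (b : ℝ) < a + 1)
    have hab : a < b + 2 := by exact_mod_cast (by linarith : (a : ℝ) < b + 2)
    omega
  · rintro ⟨hba, hab⟩
    have hba : (b : ℝ) ≤ a := by exact_mod_cast hba
    have hab : (a : ℝ) ≤ b + 1 := by exact_mod_cast hab
    constructor <;> linarith

theorem abs_intCast_add_sub_lt_one_iff (hs : 0 ≤ s) (hst : s < t) (ht : t < 1) :
    |(a + s) - (b + t)| < 1 ↔ b ≤ a ∧ a ≤ b + 1 := by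
  refine ⟨fun h ↦ (abs_intCast_add_sub_le_one_iff hs hst ht).mp h.le, fun ⟨hba, hab⟩ ↦ ?_⟩
  have hba : (b : ℝ) ≤ a := by exact_mod_cast hba
  have hab : (a : ℝ) ≤ b + 1 := by exact_mod_cast hab
  rw [abs_lt]
  constructor <;> linarith

theorem abs_intCast_add_sub_le_one_iff_lt_one {ι : Type*} [LinearOrder ι] (k : ι → ℤ)
    {f g : ι → ℝ} (hf : StrictMono f) (hf₀₁ : ∀ i, f i ∈ Set.Ico 0 1) (hg : StrictMono g)
    (hg₀₁ : ∀ i, g i ∈ Set.Ico 0 1) (i j : ι) :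
    |(k i + f i) - (k j + f j)| ≤ 1 ↔ |(k i + g i) - (k j + g j)| < 1 := by
  rcases lt_trichotomy i j with hij | rfl | hji
  · rw [abs_intCast_add_sub_le_one_iff (hf₀₁ i).1 (hf hij) (hf₀₁ j).2,
      abs_intCast_add_sub_lt_one_iff (hg₀₁ i).1 (hg hij) (hg₀₁ j).2]
  · simp
  · rw [abs_sub_comm, abs_sub_comm (_ + g i),
      abs_intCast_add_sub_le_one_iff (hf₀₁ j).1 (hf hji) (hf₀₁ i).2,
      abs_intCast_add_sub_lt_one_iff (hg₀₁ j).1 (hg hji) (hg₀₁ i).2]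

theorem floor_intCast_add_of_mem_Ico (ht : t ∈ Set.Ico 0 1) : ⌊(a + t : ℝ)⌋ = a := by
  rw [Int.floor_intCast_add, Int.floor_eq_zero_iff.mpr ht, add_zero]

theorem fract_intCast_add_of_mem_Ico (ht : t ∈ Set.Ico 0 1) : Int.fract (a + t : ℝ) = t := by
  rw [Int.fract_intCast_add, Int.fract_eq_self.mpr ht]

end FractionalParts

section Extension

variable {n : ℕ}

theorem extv_comp {α β : Type*} [Zero α] [Zero β] {φ : α → β} (hφ : φ 0 = 0) (x : Fin n → α) :
    extv (φ ∘ x) = φ ∘ extv x := by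
  ext i
  cases i using Fin.cases <;> simp [extv, hφ]

theorem strictMono_extv_iff {α : Type*} [Zero α] [Preorder α] {f : Fin n → α} :
    StrictMono (extv f) ↔ (∀ k, 0 < f k) ∧ StrictMono f :=
  Fin.strictMono_cons

theorem continuous_extv_apply (i : Fin (n + 1)) : Continuous fun x : Fin n → ℝ ↦ extv x i := by
  cases i using Fin.cases <;> simp only [extv, Fin.cases_zero, Fin.cases_succ] <;> fun_prop

end Extension

theorem isClosed_PiG (n : ℕ) (G : SimpleGraph (Fin (n + 1))) : IsClosed (PiG n G) := by
  simp only [PiG, Set.ofPred_forall]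
  exact isClosed_iInter fun i ↦ isClosed_iInter fun j ↦ isClosed_iInter fun _ ↦
    isClosed_le ((continuous_extv_apply i).sub (continuous_extv_apply j)).abs continuous_const

def fracCell (n : ℕ) (h : Fin n → ℤ) : Set (Fin n → ℝ) :=
  {x | (∀ k, ⌊x k⌋ = h k) ∧ (∀ k, 0 < Int.fract (x k)) ∧ StrictMono (Int.fract ∘ x)}

theorem piPoly_one (n : ℕ) (h : Fin n → ℤ) : piPoly n h 1 = closure (fracCell n h) := by
  simp only [piPoly, fracCell, inv_one, Equiv.Perm.coe_one, id_eq]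
  rfl

section Centroid

variable {n : ℕ} (h : Fin n → ℤ)

theorem strictMono_div_succ : StrictMono fun i : Fin (n + 1) ↦ (i : ℝ) / (n + 1) :=
  fun _ _ hij ↦ div_lt_div_of_pos_right (by exact_mod_cast hij) (by positivity)

theorem div_succ_mem_Ico (i : Fin (n + 1)) : (i : ℝ) / (n + 1) ∈ Set.Ico 0 1 :=
  ⟨by positivity, (div_lt_one (by positivity)).mpr (by exact_mod_cast i.isLt)⟩

theorem cent_comp_succ_mem_fracCell : cent n h ∘ Fin.succ ∈ fracCell n h := by
  have hfract (k : Fin n) : Int.fract (cent n h k.succ) = ((k + 1 : ℕ) : ℝ) / (n + 1) :=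
    fract_intCast_add_of_mem_Ico (div_succ_mem_Ico k.succ)
  refine ⟨fun k ↦ floor_intCast_add_of_mem_Ico (div_succ_mem_Ico k.succ), fun k ↦ ?_,
    fun k l hkl ↦ ?_⟩
  · rw [Function.comp_apply, hfract]
    positivity
  · simp only [Function.comp_apply, hfract]
    exact strictMono_div_succ (Fin.succ_lt_succ_iff.mpr hkl)

theorem abs_extv_sub_le_one_iff_cent {x : Fin n → ℝ} (hx : x ∈ fracCell n h)
    (i j : Fin (n + 1)) : |extv x i - extv x j| ≤ 1 ↔ |cent n h i - cent n h j| < 1 := by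
  obtain ⟨hfloor, hpos, hmono⟩ := hx
  have hintPart : Int.floor ∘ extv x = extv h := by
    rw [← extv_comp Int.floor_zero]
    exact congrArg extv (funext hfloor)
  have hfractMono : StrictMono (Int.fract ∘ extv x) := by
    rw [← extv_comp Int.fract_zero]
    exact strictMono_extv_iff.mpr ⟨hpos, hmono⟩
  have hdecomp (i : Fin (n + 1)) : extv x i = extv h i + Int.fract (extv x i) := by
    rw [← hintPart]
    exact (Int.floor_add_fract _).symm
  rw [hdecomp i, hdecomp j]
  exact abs_intCast_add_sub_le_one_iff_lt_one (extv h) hfractMono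
    (fun i ↦ ⟨Int.fract_nonneg _, Int.fract_lt_one _⟩) strictMono_div_succ div_succ_mem_Ico i j

end Centroid

/-- For any graph `G` on `{0, …, n}`: `π(h, Id) ⊆ Π_G` iff `G` is a subgraph of `G_h`. -/
theorem piPoly_subset_PiG_iff_le_Gh (n : ℕ) (h : Fin n → ℤ) (G : SimpleGraph (Fin (n + 1))) :
    piPoly n h 1 ⊆ PiG n G ↔ G ≤ Gh n h := by
  rw [piPoly_one, (isClosed_PiG n G).closure_subset_iff]
  constructor
  · intro hsub i j hij
    have hcent := cent_comp_succ_mem_fracCell h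
    exact ⟨hij.ne, (abs_extv_sub_le_one_iff_cent h hcent i j).mp (hsub hcent i j hij)⟩
  · intro hle x hx i j hij
    exact (abs_extv_sub_le_one_iff_cent h hx i j).mpr (hle hij).2
end

section
/- Let h ∈ Z^n with centroid h̄ (h̄_i = h_i + i/(n+1), h_0 = 0), G_h as above, and let i_0 be the index minimizing h̄. A connected spanning subgraph G ⊆ G_h admits no (G,h)-active edge if and only if G is an h-increasing tree, i.e., a tree such that along every simple path i_0, i_1, ..., i_k starting at i_0, one has h̄_{i_0} < h̄_{i_1} < ... < h̄_{i_k}. -/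
open scoped Classical
open MeasureTheory

noncomputable section

/-- The key of the pair `(i, j)`: the pair `(min(h̄_i, h̄_j), max(h̄_i, h̄_j))` with the
lexicographic order, along which edges of `G_h` are ordered. -/
def keyC (n : ℕ) (h : Fin n → ℤ) (p : Fin (n + 1) × Fin (n + 1)) : ℝ ×ₗ ℝ :=
  toLex (min (cent n h p.1) (cent n h p.2), max (cent n h p.1) (cent n h p.2))

/-- The subgraph of `G` consisting of the edges strictly greater than `e`. -/
def aboveC (n : ℕ) (h : Fin n → ℤ) (G : SimpleGraph (Fin (n + 1)))
    (e : Fin (n + 1) × Fin (n + 1)) : SimpleGraph (Fin (n + 1)) where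
  Adj a b := G.Adj a b ∧ keyC n h e < keyC n h (a, b)
  symm := by
    constructor
    intro a b hab
    refine ⟨hab.1.symm, ?_⟩
    have hk : keyC n h (a, b) = keyC n h (b, a) := by
      simp only [keyC]; rw [min_comm (cent n h a), max_comm (cent n h a)]
    rw [← hk]; exact hab.2
  loopless := ⟨fun a ha => G.loopless.irrefl a ha.1⟩

/-- An edge `e = (i, j)` of `G_h` (normalized so that `h̄_i < h̄_j`) is `(G, h)`-active if
`i` and `j` are joined by a path among the edges of `G` strictly greater than `e`. -/
def IsActiveC (n : ℕ) (h : Fin n → ℤ) (G : SimpleGraph (Fin (n + 1)))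
    (e : Fin (n + 1) × Fin (n + 1)) : Prop :=
  cent n h e.1 < cent n h e.2 ∧ (Gh n h).Adj e.1 e.2 ∧ (aboveC n h G e).Reachable e.1 e.2

/-- The finset of `(G, h)`-active edges. -/
def activeC (n : ℕ) (h : Fin n → ℤ) (G : SimpleGraph (Fin (n + 1))) :
    Finset (Fin (n + 1) × Fin (n + 1)) :=
  Finset.univ.filter (IsActiveC n h G)

/-- `G ⊕ e`: toggle the edge `e` (delete it if present, add it otherwise). -/
def toggleC {n : ℕ} (G : SimpleGraph (Fin (n + 1))) (e : Fin (n + 1) × Fin (n + 1)) :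
    SimpleGraph (Fin (n + 1)) :=
  if G.Adj e.1 e.2 then G.deleteEdges {s(e.1, e.2)}
  else G ⊔ SimpleGraph.fromEdgeSet {s(e.1, e.2)}

/-- The map `Ψ_h`: toggle the least `(G, h)`-active edge, if any. -/
def PsiH (n : ℕ) (h : Fin n → ℤ) (G : SimpleGraph (Fin (n + 1))) :
    SimpleGraph (Fin (n + 1)) :=
  if hne : (activeC n h G).Nonempty then
    toggleC G (Finset.exists_min_image (activeC n h G) (keyC n h) hne).choose
  else G

/-- The index `i_0` of the least coordinate of the centroid `h̄`. -/
def idxMin (n : ℕ) (h : Fin n → ℤ) : Fin (n + 1) :=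
  (Finite.exists_min (cent n h)).choose

/-- An `h`-increasing tree on `{0, …, n}`: a spanning tree of `G_h` such that `h̄` strictly
increases along every simple path starting at the vertex `i_0` minimizing `h̄`. -/
def IsIncTree (n : ℕ) (h : Fin n → ℤ) (T : SimpleGraph (Fin (n + 1))) : Prop :=
  T.IsTree ∧ T ≤ Gh n h ∧
    ∀ (v : Fin (n + 1)) (p : T.Walk (idxMin n h) v), p.IsPath →
      List.Chain' (fun a b => cent n h a < cent n h b) p.support

end

/-!
The centroid `h̄` is injective (the fractional part of `h̄_i` is `i/(n+1)`), so distinct edges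
have distinct keys.

If there is no active edge, then `G` is acyclic: the least edge `{x, y}` lying on a cycle would
be active, the rest of the cycle joining `x` to `y` through larger edges. And `h̄` increases
along paths from `i₀`: if a path stepped from `v` up to `d` on its way back to `i₀`, follow it from `d`
to the first vertex `b` below `v`, entered from `a`. Then `h̄_v < h̄_a < h̄_b + 1`, and every
edge on the way from `v` to `a` has its smaller end at least `h̄_v`, so `{b, v}` is active.

Conversely, in an increasing tree every vertex has at most one neighbour below it (its
predecessor on the path from `i₀`), so a path whose first step goes up keeps going up. But the
first step `x → z` of a path witnessing that `(x, y)` is active goes above `y`.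
-/

open SimpleGraph

namespace SimpleGraph.Walk

variable {V β : Type*} [LinearOrder β] {G : SimpleGraph V} {f : V → β}

theorem le_of_mem_support_of_isChain {u v w : V} (p : G.Walk u v)
    (hp : p.support.IsChain (fun a b => f a < f b)) (hw : w ∈ p.support) : f w ≤ f v :=
  hp.backwards_induction (fun x => f x ≤ f v) _ (fun _ _ hxy hy => hxy.le.trans hy)
    (fun _ => by rw [getLast_support]) w hw

theorem le_of_isPath_cons_of_lt (hf : Function.Injective f)
    (hlower : ∀ ⦃v a b⦄, G.Adj a v → G.Adj b v → f a < f v → f b < f v → a = b)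
    {c a b : V} (hca : G.Adj c a) (p : G.Walk a b) (hp : (cons hca p).IsPath)
    (hlt : f c < f a) : f a ≤ f b := by
  induction p generalizing c with
  | nil => exact le_rfl
  | @cons a d b had q ih =>
    rw [cons_isPath_iff, support_cons, List.mem_cons, not_or] at hp
    have hup : f a < f d := by
      refine (lt_or_gt_of_ne (hf.ne (G.ne_of_adj had))).resolve_right fun hda => ?_
      exact hp.2.2 (hlower hca had.symm hlt hda ▸ q.start_mem_support)
    exact hup.le.trans (ih had hp.1 hup)

end SimpleGraph.Walk

section

variable {n : ℕ} {h : Fin n → ℤ} {G : SimpleGraph (Fin (n + 1))}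

theorem fract_cent (i : Fin (n + 1)) : Int.fract (cent n h i) = i / (n + 1) := by
  have hi : (i : ℝ) < n + 1 := by exact_mod_cast i.isLt
  rw [cent, Int.fract_intCast_add, Int.fract_eq_self]
  exact ⟨by positivity, (div_lt_one (by positivity)).2 hi⟩

theorem cent_injective : Function.Injective (cent n h) := by
  intro i j hij
  have := congrArg Int.fract hij
  rw [fract_cent, fract_cent, div_left_inj' (by positivity)] at this
  exact Fin.ext (by exact_mod_cast this)

theorem cent_idxMin_le (x : Fin (n + 1)) : cent n h (idxMin n h) ≤ cent n h x :=
  (Finite.exists_min (cent n h)).choose_spec x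

theorem keyC_lt_of_lt_of_lt {x y a b : Fin (n + 1)} (ha : cent n h x < cent n h a)
    (hb : cent n h x < cent n h b) : keyC n h (x, y) < keyC n h (a, b) :=
  Prod.Lex.toLex_lt_toLex.2 <| Or.inl <| (min_le_left _ _).trans_lt (lt_min ha hb)

theorem keyC_lt_keyC_iff {x y z : Fin (n + 1)} (hxy : cent n h x ≤ cent n h y) :
    keyC n h (x, y) < keyC n h (x, z) ↔ cent n h y < cent n h z := by
  simp only [keyC, Prod.Lex.toLex_lt_toLex, min_eq_left hxy, max_eq_right hxy]
  rcases le_total (cent n h x) (cent n h z) with hxz | hzx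
  · simp [min_eq_left hxz, max_eq_right hxz]
  · simp only [min_eq_right hzx, max_eq_left hzx]
    grind

noncomputable def keyS (n : ℕ) (h : Fin n → ℤ) (e : Sym2 (Fin (n + 1))) : ℝ ×ₗ ℝ :=
  toLex ((e.map (cent n h)).inf, (e.map (cent n h)).sup)

theorem keyS_injective : Function.Injective (keyS n h) := fun _ _ he =>
  Sym2.map.injective cent_injective <|
    Sym2.inf_eq_inf_and_sup_eq_sup.1 (Prod.ext_iff.1 (toLex_inj.1 he))

theorem gh_adj_of_lt {a b : Fin (n + 1)} (hab : cent n h a < cent n h b)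
    (hba : cent n h b < cent n h a + 1) : (Gh n h).Adj a b :=
  ⟨cent_injective.ne_iff.1 hab.ne, abs_sub_lt_iff.2 ⟨by linarith, by linarith⟩⟩

theorem exists_isActiveC_of_walk_crossing (hG : G ≤ Gh n h) {v d z : Fin (n + 1)}
    (hvd : G.Adj v d) (hvd_lt : cent n h v < cent n h d) (r : G.Walk d z) (hvr : v ∉ r.support)
    (hz : cent n h z < cent n h v) : ∃ e, IsActiveC n h G e := by
  set S : Set (Fin (n + 1)) := {u | cent n h v < cent n h u ∧
    ∀ c, cent n h c < cent n h v → (aboveC n h G (c, v)).Reachable v u}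
  have hdS : d ∈ S := ⟨hvd_lt, fun c hc =>
    Adj.reachable (G := aboveC n h G (c, v)) ⟨hvd, keyC_lt_of_lt_of_lt hc (hc.trans hvd_lt)⟩⟩
  obtain ⟨⟨⟨a, b⟩, hab⟩, hmem, haS, hbS⟩ :=
    r.exists_boundary_dart S hdS fun hzS => hz.not_gt hzS.1
  have hbv : b ≠ v := fun hb => hvr (hb ▸ r.dart_snd_mem_support_of_mem_darts hmem)
  have hb_v : cent n h b < cent n h v := by
    refine (lt_or_gt_of_ne (cent_injective.ne hbv)).resolve_right fun hvb => hbS ⟨hvb, ?_⟩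
    exact fun c hc => (haS.2 c hc).trans <| Adj.reachable (G := aboveC n h G (c, v))
      ⟨hab, keyC_lt_of_lt_of_lt (hc.trans haS.1) (hc.trans hvb)⟩
  refine ⟨(b, v), hb_v, gh_adj_of_lt hb_v ?_, ?_⟩
  · linarith [(abs_sub_lt_iff.1 (hG hab).2).1, haS.1]
  · exact (Adj.reachable (G := aboveC n h G (b, v))
      ⟨hab.symm, (keyC_lt_keyC_iff hb_v.le).2 haS.1⟩).trans (haS.2 b hb_v).symm

theorem isAcyclic_of_forall_not_isActiveC (hG : G ≤ Gh n h)
    (hact : ∀ e, ¬ IsActiveC n h G e) : G.IsAcyclic := by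
  intro u c hc
  obtain ⟨e, he, hmin⟩ := Set.exists_min_image
    {e | ∃ (u : Fin (n + 1)) (c : G.Walk u u), c.IsCycle ∧ e ∈ c.edges} (keyS n h)
    (Set.toFinite _) ⟨_, u, c, hc, Walk.mk_start_snd_mem_edges hc.not_nil⟩
  induction e using Sym2.ind with | _ x y =>
  wlog hxy : cent n h x < cent n h y generalizing x y
  · obtain ⟨hadj, -⟩ := adj_and_reachable_delete_edges_iff_exists_cycle.2 he
    refine this y x (Sym2.eq_swap ▸ he) (Sym2.eq_swap ▸ hmin) ?_
    exact (lt_or_gt_of_ne (cent_injective.ne hadj.ne)).resolve_left hxy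
  obtain ⟨hadj, ⟨q⟩⟩ := adj_and_reachable_delete_edges_iff_exists_cycle.2 he
  set p := q.bypass.mapLe (deleteEdges_le _)
  have hpe : ∀ f ∈ p.edges, f ∈ G.edgeSet \ {s(x, y)} := fun f hf => by
    rw [← edgeSet_deleteEdges]
    exact q.bypass.edges_subset_edgeSet (by rwa [Walk.edges_mapLe_eq_edges] at hf)
  have hcycle : (Walk.cons hadj.symm p).IsCycle :=
    Path.cons_isCycle ⟨p, q.bypass_isPath.mapLe _⟩ hadj.symm
      fun hf => (hpe _ hf).2 Sym2.eq_swap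
  have habove : ∀ f ∈ p.edges, f ∈ (aboveC n h G (x, y)).edgeSet := by
    intro f hf
    induction f using Sym2.ind with | _ a b =>
    refine ⟨(hpe _ hf).1, (hmin _ ⟨y, _, hcycle, List.mem_cons_of_mem _ hf⟩).lt_of_ne ?_⟩
    exact fun hk => (hpe _ hf).2 (keyS_injective hk).symm
  exact hact (x, y) ⟨hxy, hG hadj, ⟨p.transfer _ habove⟩⟩

theorem isChain_support_of_forall_not_isActiveC (hG : G ≤ Gh n h)
    (hact : ∀ e, ¬ IsActiveC n h G e) {v z : Fin (n + 1)} (hz : ∀ u, cent n h z ≤ cent n h u)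
    (q : G.Walk v z) (hq : q.IsPath) : q.support.IsChain (fun a b => cent n h b < cent n h a) := by
  induction q with
  | nil => exact List.isChain_singleton _
  | @cons v d z hvd r ih =>
    rw [Walk.cons_isPath_iff] at hq
    have hzv : cent n h z < cent n h v :=
      (hz v).lt_of_ne (cent_injective.ne fun hzv => hq.2 (hzv ▸ r.end_mem_support))
    have hdv : cent n h d < cent n h v := by
      refine (lt_or_gt_of_ne (cent_injective.ne hvd.ne.symm)).resolve_right fun hvd_lt => ?_
      obtain ⟨e, he⟩ := exists_isActiveC_of_walk_crossing hG hvd hvd_lt r hq.2 hzv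
      exact hact e he
    have hr := ih hz hq.1
    rw [← r.cons_tail_support] at hr
    rw [Walk.support_cons, ← r.cons_tail_support]
    exact hr.cons_cons hdv

theorem aboveC_le {e : Fin (n + 1) × Fin (n + 1)} : aboveC n h G e ≤ G := fun _ _ hab => hab.1

theorem IsIncTree.eq_of_adj_of_cent_lt (hT : IsIncTree n h G) {v a b : Fin (n + 1)}
    (ha : G.Adj a v) (hb : G.Adj b v) (hav : cent n h a < cent n h v)
    (hbv : cent n h b < cent n h v) : a = b := by
  obtain ⟨htree, -, hinc⟩ := hT
  have hpath : ∀ {c}, (hc : G.Adj c v) → cent n h c < cent n h v →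
      ∃ q : G.Walk (idxMin n h) c, (q.concat hc).IsPath := by
    intro c hc hcv
    obtain ⟨q, hq, -⟩ := htree.existsUnique_path (idxMin n h) c
    refine ⟨q, hq.concat (fun hv => ?_) hc⟩
    exact (q.le_of_mem_support_of_isChain (hinc c q hq) hv).not_gt hcv
  obtain ⟨qa, hqa⟩ := hpath ha hav
  obtain ⟨qb, hqb⟩ := hpath hb hbv
  obtain ⟨rfl, -⟩ := Walk.concat_inj ((htree.existsUnique_path _ v).unique hqa hqb)
  rfl

end

/-- A connected spanning subgraph `G ⊆ G_h` admits no `(G, h)`-active edge iff it is an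
`h`-increasing tree. -/
theorem no_activeC_iff_incTree (n : ℕ) (h : Fin n → ℤ) (G : SimpleGraph (Fin (n + 1)))
    (hG1 : G ≤ Gh n h) (hG2 : G.Connected) :
    (∀ e : Fin (n + 1) × Fin (n + 1), ¬ IsActiveC n h G e) ↔ IsIncTree n h G := by
  constructor
  · intro hact
    refine ⟨⟨hG2, isAcyclic_of_forall_not_isActiveC hG1 hact⟩, hG1, fun v p hp => ?_⟩
    have hdesc := isChain_support_of_forall_not_isActiveC hG1 hact
      cent_idxMin_le p.reverse hp.reverse
    rwa [Walk.support_reverse, List.isChain_reverse] at hdesc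
  · rintro hT ⟨x, y⟩ ⟨hxy, -, ⟨w⟩⟩
    obtain ⟨p, hpath⟩ := w.toPath
    cases p with
    | nil => exact hxy.false
    | cons hxz q =>
      have hyz := (keyC_lt_keyC_iff hxy.le).1 hxz.2
      have := Walk.le_of_isPath_cons_of_lt cent_injective (fun _ _ _ => hT.eq_of_adj_of_cent_lt)
        hxz.1 (q.mapLe aboveC_le) (hpath.mapLe aboveC_le) (hxy.trans hyz)
      exact (this.trans_lt hyz).false
end
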